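/- arXiv:2506.09483 — 3 statements merged into one kernel-verified Lean document; each statement's English description precedes it below -/
import Mathlib

section
/- Let T be a contraction on a Hilbert space H and let H₀ = {h ∈ H : ‖T^m h‖ = ‖h‖ and ‖T*^m h‖ = ‖h‖ for all m}. If h ∈ H₀, then T h ∈ H₀ and T* h ∈ H₀. -/
open ContinuousLinearMap Filter
open scoped InnerProductSpace

variable {H : Type*} [NormedAddCommGroup H] [InnerProductSpace ℂ H] [CompleteSpace H]

lemma adjoint_comp_self_apply_eq (T : H →L[ℂ] H) (hT : ‖T‖ ≤ 1) (h : H)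
    (hn : ‖T h‖ = ‖h‖) : adjoint T (T h) = h := by
  have h1 : ‖adjoint T (T h)‖ ≤ ‖h‖ := by
    calc ‖adjoint T (T h)‖ ≤ ‖adjoint T‖ * ‖T h‖ := le_opNorm _ _
      _ ≤ 1 * ‖h‖ := by
          rw [hn]
          exact mul_le_mul_of_nonneg_right
            (by rw [LinearIsometryEquiv.norm_map]; exact hT) (norm_nonneg _)
      _ = ‖h‖ := one_mul _
  have h2 : RCLike.re (⟪h, adjoint T (T h)⟫_ℂ) = ‖h‖ ^ 2 := by
    rw [adjoint_inner_right, ← hn]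
    exact inner_self_eq_norm_sq (𝕜 := ℂ) _
  have key : ‖h - adjoint T (T h)‖ ^ 2 ≤ 0 := by
    rw [norm_sub_sq (𝕜 := ℂ), h2]
    nlinarith [norm_nonneg h, norm_nonneg (adjoint T (T h))]
  have h0 : ‖h - adjoint T (T h)‖ = 0 := by
    nlinarith [norm_nonneg (h - adjoint T (T h))]
  have := norm_eq_zero.mp h0
  exact (sub_eq_zero.mp this).symm

/-- The set of vectors on which the contraction `T` acts unitarily. -/
def unitVectors (T : H →L[ℂ] H) : Set H :=
  {h | ∀ m : ℕ, ‖(T ^ m) h‖ = ‖h‖ ∧ ‖(ContinuousLinearMap.adjoint T ^ m) h‖ = ‖h‖}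

theorem unitVectors_invariant (T : H →L[ℂ] H) (hT : ‖T‖ ≤ 1) (h : H)
    (hh : h ∈ unitVectors T) :
    T h ∈ unitVectors T ∧ adjoint T h ∈ unitVectors T := by
  have hTa : ‖adjoint T‖ ≤ 1 := by rw [LinearIsometryEquiv.norm_map]; exact hT
  have hn : ‖T h‖ = ‖h‖ := by simpa using (hh 1).1
  have hna : ‖adjoint T h‖ = ‖h‖ := by simpa using (hh 1).2
  have key1 : adjoint T (T h) = h := adjoint_comp_self_apply_eq T hT h hn
  have key2 : T (adjoint T h) = h := by
    have := adjoint_comp_self_apply_eq (adjoint T) hTa h hna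
    rwa [adjoint_adjoint] at this
  have hpow : ∀ (A : H →L[ℂ] H) (n : ℕ) (x : H), (A ^ (n + 1)) x = (A ^ n) (A x) := by
    intro A n x
    rw [pow_succ, ContinuousLinearMap.mul_apply]
  constructor
  · intro m
    constructor
    · rw [← hpow T m h, (hh (m + 1)).1, hn]
    · cases m with
      | zero => simp
      | succ n => rw [hpow, key1, (hh n).2, hn]
  · intro m
    constructor
    · cases m with
      | zero => simp
      | succ n => rw [hpow, key2, (hh n).1, hna]
    · rw [← hpow (adjoint T) m h, (hh (m + 1)).2, hna]
end

section
/- Let U = [[A,B],[C,D]] be a unitary 2×2 block operator, where D is a contraction from a Hilbert space K to itself and B is a contraction from K to another Hilbert space L (so that B*B + D*D = I on K and CC* = I_K - DD*). Then for every η ∈ L, Σ_{n=0}^∞ ‖C* Dⁿ* B* η‖² ≤ ‖B* η‖² ≤ ‖η‖², and the map Θ̃ := A* ⊕ ⊕_{n=0}^∞ C* D*ⁿ B* is a well-defined contraction from the domain of A* into the ℓ²-direct sum. -/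
set_option maxHeartbeats 1000000


open ContinuousLinearMap Filter

lemma pythagoras_aux {H₁ H₂ H₃ : Type*} [NormedAddCommGroup H₁] [InnerProductSpace ℂ H₁]
    [CompleteSpace H₁] [NormedAddCommGroup H₂] [InnerProductSpace ℂ H₂] [CompleteSpace H₂]
    [NormedAddCommGroup H₃] [InnerProductSpace ℂ H₃] [CompleteSpace H₃]
    (P : H₁ →L[ℂ] H₃) (Q : H₂ →L[ℂ] H₃)
    (h : P ∘L adjoint P + Q ∘L adjoint Q = ContinuousLinearMap.id ℂ H₃) (x : H₃) :
    ‖adjoint P x‖ ^ 2 + ‖adjoint Q x‖ ^ 2 = ‖x‖ ^ 2 := by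
  have hx : P (adjoint P x) + Q (adjoint Q x) = x := by
    have := congrArg (fun T : H₃ →L[ℂ] H₃ => T x) h
    simpa using this
  have h1 : (‖adjoint P x‖ : ℝ) ^ 2 = RCLike.re (inner (𝕜 := ℂ) x (P (adjoint P x))) := by
    rw [← ContinuousLinearMap.adjoint_inner_left]
    rw [norm_sq_eq_re_inner (𝕜 := ℂ)]
  have h2 : (‖adjoint Q x‖ : ℝ) ^ 2 = RCLike.re (inner (𝕜 := ℂ) x (Q (adjoint Q x))) := by
    rw [← ContinuousLinearMap.adjoint_inner_left]
    rw [norm_sq_eq_re_inner (𝕜 := ℂ)]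
  rw [h1, h2, ← map_add, ← inner_add_right, hx, ← norm_sq_eq_re_inner (𝕜 := ℂ)]

theorem transfer_function_contractive
    {K₁ K₂ : Type*} [NormedAddCommGroup K₁] [InnerProductSpace ℂ K₁] [CompleteSpace K₁]
    [NormedAddCommGroup K₂] [InnerProductSpace ℂ K₂] [CompleteSpace K₂]
    (A : K₁ →L[ℂ] K₁) (B : K₂ →L[ℂ] K₁) (C : K₁ →L[ℂ] K₂) (D : K₂ →L[ℂ] K₂)
    (h11 : A ∘L adjoint A + B ∘L adjoint B = ContinuousLinearMap.id ℂ K₁)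
    (h22 : C ∘L adjoint C + D ∘L adjoint D = ContinuousLinearMap.id ℂ K₂)
    (h12 : A ∘L adjoint C + B ∘L adjoint D = 0)
    (g11 : adjoint A ∘L A + adjoint C ∘L C = ContinuousLinearMap.id ℂ K₁)
    (g22 : adjoint B ∘L B + adjoint D ∘L D = ContinuousLinearMap.id ℂ K₂)
    (g12 : adjoint A ∘L B + adjoint C ∘L D = 0)
    (η : K₁) :
    Summable (fun n : ℕ => ‖adjoint C ((adjoint D ^ n) (adjoint B η))‖ ^ 2) ∧
    (∑' n : ℕ, ‖adjoint C ((adjoint D ^ n) (adjoint B η))‖ ^ 2) ≤ ‖adjoint B η‖ ^ 2 ∧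
    ‖adjoint B η‖ ^ 2 ≤ ‖η‖ ^ 2 ∧
    ‖adjoint A η‖ ^ 2 + (∑' n : ℕ, ‖adjoint C ((adjoint D ^ n) (adjoint B η))‖ ^ 2) ≤
      ‖η‖ ^ 2 := by
  set x : ℕ → K₂ := fun n => (adjoint D ^ n) (adjoint B η) with hxdef
  have hstep : ∀ n : ℕ, ‖adjoint C (x n)‖ ^ 2 = ‖x n‖ ^ 2 - ‖x (n + 1)‖ ^ 2 := by
    intro n
    have := pythagoras_aux C D h22 (x n)
    have hx1 : x (n + 1) = adjoint D (x n) := by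
      simp only [hxdef, pow_succ', ContinuousLinearMap.mul_apply]
    rw [hx1]; linarith
  have hAB : ‖adjoint A η‖ ^ 2 + ‖adjoint B η‖ ^ 2 = ‖η‖ ^ 2 := pythagoras_aux A B h11 η
  have hsum : ∀ N : ℕ, ∑ n ∈ Finset.range N, ‖adjoint C (x n)‖ ^ 2 ≤ ‖adjoint B η‖ ^ 2 := by
    intro N
    have htel : ∑ n ∈ Finset.range N, ‖adjoint C (x n)‖ ^ 2
        = ‖x 0‖ ^ 2 - ‖x N‖ ^ 2 := by
      have := Finset.sum_range_sub' (fun n => ‖x n‖ ^ 2) N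
      rw [← this]
      exact Finset.sum_congr rfl fun n _ => hstep n
    have hx0 : x 0 = adjoint B η := by simp [hxdef]
    rw [htel, hx0]
    have : (0:ℝ) ≤ ‖x N‖ ^ 2 := sq_nonneg _
    linarith
  have hsummable : Summable (fun n : ℕ => ‖adjoint C (x n)‖ ^ 2) :=
    summable_of_sum_range_le (fun n => sq_nonneg _) hsum
  have htsum : (∑' n : ℕ, ‖adjoint C (x n)‖ ^ 2) ≤ ‖adjoint B η‖ ^ 2 :=
    Summable.tsum_le_of_sum_range_le hsummable hsum
  have hB : ‖adjoint B η‖ ^ 2 ≤ ‖η‖ ^ 2 := by nlinarith [sq_nonneg ‖adjoint A η‖]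
  exact ⟨hsummable, htsum, hB, by linarith⟩
end

section
/- In the setting of the previous context (U = [[A,B],[C,D]] unitary, Θ̃ = A* ⊕ ⊕ₙ C*D*ⁿB*), Θ̃ is an isometry if and only if the completely non-unitary part of the contraction D is pure, i.e., lim_{n→∞} ‖D*ⁿ B* η‖ = 0 for all η. -/
open ContinuousLinearMap Filter

open scoped InnerProductSpace in
lemma aux_norm_sq {E F : Type*} [NormedAddCommGroup E] [InnerProductSpace ℂ E] [CompleteSpace E]
    [NormedAddCommGroup F] [InnerProductSpace ℂ F] [CompleteSpace F]
    (P : E →L[ℂ] F) (Q : F →L[ℂ] F)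
    (h : P ∘L adjoint P + Q ∘L adjoint Q = ContinuousLinearMap.id ℂ F) (y : F) :
    ‖adjoint P y‖ ^ 2 + ‖adjoint Q y‖ ^ 2 = ‖y‖ ^ 2 := by
  have h' : P (adjoint P y) + Q (adjoint Q y) = y := by
    have := congrFun (congrArg DFunLike.coe h) y
    simpa using this
  have h2 : (⟪y, P (adjoint P y) + Q (adjoint Q y)⟫_ℂ) = ⟪y, y⟫_ℂ := by rw [h']
  rw [inner_add_right, ← adjoint_inner_left P, ← adjoint_inner_left Q] at h2
  rw [inner_self_eq_norm_sq_to_K, inner_self_eq_norm_sq_to_K, inner_self_eq_norm_sq_to_K] at h2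
  exact_mod_cast h2

lemma key_lemma {F : Type*} [NormedAddCommGroup F] [InnerProductSpace ℂ F] [CompleteSpace F]
    {K₁ : Type*} [NormedAddCommGroup K₁] [InnerProductSpace ℂ K₁] [CompleteSpace K₁]
    (C : K₁ →L[ℂ] F) (D : F →L[ℂ] F)
    (h22 : C ∘L adjoint C + D ∘L adjoint D = ContinuousLinearMap.id ℂ F) (x : F) :
    ∃ L : ℝ, Tendsto (fun n : ℕ => ‖(adjoint D ^ n) x‖ ^ 2) atTop (nhds L) ∧
      (∑' n : ℕ, ‖adjoint C ((adjoint D ^ n) x)‖ ^ 2) = ‖x‖ ^ 2 - L := by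
  classical
  set g : ℕ → ℝ := fun n => ‖(adjoint D ^ n) x‖ ^ 2 with hg
  set f : ℕ → ℝ := fun n => ‖adjoint C ((adjoint D ^ n) x)‖ ^ 2 with hf
  have hstep : ∀ n, f n = g n - g (n + 1) := by
    intro n
    have h := aux_norm_sq C D h22 ((adjoint D ^ n) x)
    have hpow : (adjoint D ^ (n + 1)) x = adjoint D ((adjoint D ^ n) x) := by
      rw [pow_succ']; rfl
    simp only [hf, hg, hpow]
    linarith [h]
  have hanti : Antitone g := by
    apply antitone_nat_of_succ_le
    intro n
    have := hstep n
    have hfn : 0 ≤ f n := by positivity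
    linarith
  have hbdd : BddBelow (Set.range g) := ⟨0, by rintro _ ⟨n, rfl⟩; positivity⟩
  set L := ⨅ n, g n with hL
  have hgL : Tendsto g atTop (nhds L) := tendsto_atTop_ciInf hanti hbdd
  have hpartial : ∀ N, ∑ i ∈ Finset.range N, f i = g 0 - g N := by
    intro N
    calc ∑ i ∈ Finset.range N, f i = ∑ i ∈ Finset.range N, (g i - g (i + 1)) := by
          exact Finset.sum_congr rfl fun i _ => hstep i
      _ = g 0 - g N := Finset.sum_range_sub' g N
  have htend : Tendsto (fun N => ∑ i ∈ Finset.range N, f i) atTop (nhds (g 0 - L)) := by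
    simp only [hpartial]
    exact tendsto_const_nhds.sub hgL
  have hfnonneg : ∀ n, 0 ≤ f n := fun n => by positivity
  have hsum : HasSum f (g 0 - L) :=
    (hasSum_iff_tendsto_nat_of_nonneg hfnonneg _).2 htend
  refine ⟨L, hgL, ?_⟩
  have hg0 : g 0 = ‖x‖ ^ 2 := by simp [hg]
  rw [hsum.tsum_eq, hg0]

theorem transfer_function_isometry_iff_pure
    {K₁ K₂ : Type*} [NormedAddCommGroup K₁] [InnerProductSpace ℂ K₁] [CompleteSpace K₁]
    [NormedAddCommGroup K₂] [InnerProductSpace ℂ K₂] [CompleteSpace K₂]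
    (A : K₁ →L[ℂ] K₁) (B : K₂ →L[ℂ] K₁) (C : K₁ →L[ℂ] K₂) (D : K₂ →L[ℂ] K₂)
    (h11 : A ∘L adjoint A + B ∘L adjoint B = ContinuousLinearMap.id ℂ K₁)
    (h22 : C ∘L adjoint C + D ∘L adjoint D = ContinuousLinearMap.id ℂ K₂)
    (h12 : A ∘L adjoint C + B ∘L adjoint D = 0)
    (g11 : adjoint A ∘L A + adjoint C ∘L C = ContinuousLinearMap.id ℂ K₁)
    (g22 : adjoint B ∘L B + adjoint D ∘L D = ContinuousLinearMap.id ℂ K₂)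
    (g12 : adjoint A ∘L B + adjoint C ∘L D = 0) :
    (∀ η : K₁, ‖adjoint A η‖ ^ 2 +
        (∑' n : ℕ, ‖adjoint C ((adjoint D ^ n) (adjoint B η))‖ ^ 2) = ‖η‖ ^ 2) ↔
    (∀ η : K₁,
      Tendsto (fun n : ℕ => ‖(adjoint D ^ n) (adjoint B η)‖) atTop (nhds 0)) := by
  constructor
  · intro h η
    obtain ⟨L, hgL, htsum⟩ := key_lemma C D h22 (adjoint B η)
    have h11' : B ∘L adjoint B + A ∘L adjoint A = ContinuousLinearMap.id ℂ K₁ := by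
      rw [add_comm]; exact h11
    have hAB := aux_norm_sq B A h11' η
    have hLzero : L = 0 := by
      have := h η
      rw [htsum] at this
      linarith
    rw [hLzero] at hgL
    have : Tendsto (fun n : ℕ => Real.sqrt (‖(adjoint D ^ n) (adjoint B η)‖ ^ 2)) atTop
        (nhds (Real.sqrt 0)) := (Real.continuous_sqrt.tendsto 0).comp hgL
    simpa [Real.sqrt_sq (norm_nonneg _)] using this
  · intro h η
    obtain ⟨L, hgL, htsum⟩ := key_lemma C D h22 (adjoint B η)
    have h11' : B ∘L adjoint B + A ∘L adjoint A = ContinuousLinearMap.id ℂ K₁ := by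
      rw [add_comm]; exact h11
    have hAB := aux_norm_sq B A h11' η
    have hg0 : Tendsto (fun n : ℕ => ‖(adjoint D ^ n) (adjoint B η)‖ ^ 2) atTop (nhds 0) := by
      simpa using ((h η).pow 2)
    have hLzero : L = 0 := tendsto_nhds_unique hgL hg0
    rw [htsum, hLzero]
    linarith
end
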